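/- Let D ⊂ ℂⁿ be a bounded strictly convex domain with C² boundary S, outward unit normal ν, and constants α₁, α₂, r₁ > 0 as in the basic convexity estimates. Set λ = 4√(α₂/α₁) and let s be the covering integer for this λ. For families ℱ_i = {𝔹(z_{i,j}, λr)} (1 ≤ i ≤ 2s, with ℱ_{i+s} = ℱ_i and z_{i+s,j} = z_{i,j}) of pairwise disjoint balls with centers z_{i,j} ∈ S whose concentric balls of radius r cover S, define φ_{i,j}(z) = exp(−m⟨z_{i,j} − z, ν(z_{i,j})⟩) and, for coefficients |β_{i,j}| ≤ 1, g_i(z) = Σ_{j=1}^{N_i} β_{i,j} φ_{i,j}(z). Then for every sufficiently small η > 0 there exist m > 0 and r > 0 with 0 < λr < r₁ such that for each i, 1 ≤ i ≤ 2s: (a) if z ∈ S lies in no ball of ℱ_i, then |g_i(z)| < η; (b) if z lies in the closure of D and in 𝔹(z_{i,j}, λr) for some j, then |g_i(z) − β_{i,j}φ_{i,j}(z)| < η; (c) if z ∈ S ∩ 𝔹(z_{i,j}, r) for some j, then |φ_{i,j}(z)| ≥ C η^{1/16}, where C > 0 is a constant independent of r, m and η; (d) if z lies in the closure of D and on the sphere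 b𝔹(z_{i,j}, λr) for some j, then |φ_{i,j}(z)| < η^{2/3}. Moreover r can be taken arbitrarily small and m arbitrarily large. -/

import Mathlib

open Metric Set Filter Function
open scoped ENNReal Topology

noncomputable section

/-- `ℂⁿ` with the Euclidean (Hermitian) metric. -/
abbrev CSp (n : ℕ) := EuclideanSpace ℂ (Fin n)

/-- `D` is a bounded strictly convex domain in `ℂⁿ` with boundary of class `C²`:
`D` is open, connected, bounded, strictly convex, and admits a `C²` defining function
with nonvanishing gradient on the boundary. -/
def IsStrictlyConvexC2Domain {n : ℕ} (D : Set (CSp n)) : Prop :=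
  IsOpen D ∧ IsConnected D ∧ Bornology.IsBounded D ∧ StrictConvex ℝ D ∧
    ∃ ρ : CSp n → ℝ, ContDiff ℝ 2 ρ ∧ D = {z | ρ z < 0} ∧
      ∀ z ∈ frontier D, fderiv ℝ ρ z ≠ 0

/-- `ν` is the outward unit normal field on the boundary of the convex domain `D`:
at every boundary point `w`, `ν w` is a unit vector and the real hyperplane through `w`
orthogonal to `ν w` supports `D`, i.e. `Re⟪z - w, ν w⟫ ≤ 0` for all `z ∈ closure D`. -/
def IsOutwardUnitNormal {n : ℕ} (D : Set (CSp n)) (ν : CSp n → CSp n) : Prop :=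
  ∀ w ∈ frontier D, ‖ν w‖ = 1 ∧ ∀ z ∈ closure D, (inner ℂ (ν w) (z - w) : ℂ).re ≤ 0

/-- `s` is a covering integer for the compact set `S` and the factor `lam`: for every
`r > 0` there are `s` finite families of pairwise disjoint balls of radius `lam * r`
centered on `S` such that the concentric balls of radius `r` cover `S`. -/
def IsCoveringInteger {n : ℕ} (S : Set (CSp n)) (lam : ℝ) (s : ℕ) : Prop :=
  0 < s ∧ ∀ r : ℝ, 0 < r →
    ∃ (N : Fin s → ℕ) (c : (i : Fin s) → Fin (N i) → CSp n),
      (∀ i j, c i j ∈ S) ∧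
      (∀ i, ∀ j k, j ≠ k → Disjoint (ball (c i j) (lam * r)) (ball (c i k) (lam * r))) ∧
      S ⊆ ⋃ i, ⋃ j, ball (c i j) r

/-- The holomorphic peak function `φ(z) = exp(-m⟨w - z, ν w⟩)` associated to the boundary
point `w`, the outward normal `ν w` and the parameter `m` (the Hermitian product being
conjugate-linear in `ν w`, so that `φ` is holomorphic in `z`). -/
noncomputable def peakFn {n : ℕ} (ν : CSp n → CSp n) (m : ℝ) (w z : CSp n) : ℂ :=
  Complex.exp (-(m : ℂ) * (inner ℂ (ν w) (w - z) : ℂ))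

/-!
Put `d = dim_ℝ ℂⁿ`, `K = d + 1` and choose `m α₂ r² = T := K/4 - (log η)/16`. Since
`λ² = 16 α₂/α₁`, the two convexity estimates give `|φ_{i,j}| ≥ e^{-T} = e^{-K/4} η^{1/16}` on
`S ∩ 𝔹(z_{i,j}, r)` and `|φ_{i,j}(z)| ≤ exp(-16T (|z - z_{i,j}|/λr)²)` near `S`, which is
`η e^{-4K}` on the sphere of radius `λr`. In (a) and (b) all centres that count are at distance
at least `λr` from `z`; comparing volumes, at most `(q+2)^d` of the disjoint `λr`-balls have
their centre at distance in `[qλr, (q+1)λr)`, so the Gaussian tail is at most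
`η Σ_q 2^{-(q+2)} ≤ η/2`.
-/

open Module

theorem pow_mul_exp_neg_mul_sq_le {d q : ℕ} {x : ℝ} (hx : 1 ≤ x) (hqx : (q : ℝ) ≤ x) :
    ((q : ℝ) + 2) ^ d * Real.exp (-(4 * (d + 1)) * x ^ 2) ≤ (1 / 2) ^ (q + 2) := by
  have hpow : ((q : ℝ) + 2) ^ d ≤ Real.exp ((q + 1) * d) := by
    rw [mul_comm, Real.exp_nat_mul]
    exact pow_le_pow_left₀ (by positivity) (by linarith [Real.add_one_le_exp ((q : ℝ) + 1)]) d
  have hhalf : Real.exp (-((q + 2 : ℕ) : ℝ)) ≤ (1 / 2) ^ (q + 2) := by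
    rw [Real.exp_neg, ← Real.exp_one_pow, one_div, inv_pow]
    gcongr
    linarith [Real.add_one_le_exp 1]
  have hexponent : (q + 1) * d - 4 * (d + 1) * x ^ 2 ≤ -((q + 2 : ℕ) : ℝ) := by
    have hx2 : (q : ℝ) + 1 ≤ 2 * x ^ 2 := by nlinarith
    push_cast
    nlinarith [mul_le_mul_of_nonneg_left hx2 (by positivity : (0 : ℝ) ≤ d + 1)]
  calc ((q : ℝ) + 2) ^ d * Real.exp (-(4 * (d + 1)) * x ^ 2)
      ≤ Real.exp ((q + 1) * d) * Real.exp (-(4 * (d + 1)) * x ^ 2) := by gcongr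
    _ ≤ Real.exp (-((q + 2 : ℕ) : ℝ)) := by
        rw [← Real.exp_add]; exact Real.exp_le_exp.mpr (by linarith)
    _ ≤ (1 / 2) ^ (q + 2) := hhalf

section Packing

open MeasureTheory

variable {E ι : Type*} [NormedAddCommGroup E] [NormedSpace ℝ E] [FiniteDimensional ℝ E]

theorem card_mul_pow_finrank_le_of_pairwiseDisjoint_ball {c : ι → E} {a R : ℝ} (ha : 0 < a)
    (hR : 0 ≤ R) {F : Finset ι} (hdisj : (F : Set ι).PairwiseDisjoint fun j => ball (c j) a)
    {z : E} (hF : ∀ j ∈ F, dist z (c j) < R) :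
    F.card * a ^ finrank ℝ E ≤ (R + a) ^ finrank ℝ E := by
  borelize E
  set μ : Measure E := Measure.addHaar
  have hsub : ⋃ j ∈ F, ball (c j) a ⊆ ball z (R + a) := by
    refine Set.iUnion₂_subset fun j hj x hx => ?_
    rw [mem_ball] at hx ⊢
    linarith [dist_triangle x (c j) z, dist_comm z (c j), hF j hj]
  have hμ : ∑ j ∈ F, μ (ball (c j) a) ≤ μ (ball z (R + a)) := by
    rw [← measure_biUnion_finset hdisj fun _ _ => measurableSet_ball]
    exact measure_mono hsub
  simp only [μ, Measure.addHaar_ball_of_pos _ _ ha,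
    Measure.addHaar_ball_of_pos _ _ (add_pos_of_nonneg_of_pos hR ha),
    Finset.sum_const, nsmul_eq_mul, ← mul_assoc] at hμ
  have hunit := (measure_ball_pos μ (0 : E) one_pos).ne'
  rwa [ENNReal.mul_le_mul_iff_left hunit measure_ball_lt_top.ne,
    ← ENNReal.ofReal_natCast, ← ENNReal.ofReal_mul (by positivity),
    ENNReal.ofReal_le_ofReal_iff (by positivity)] at hμ

theorem card_filter_floor_dist_div_eq_le {c : ι → E} {a : ℝ} (ha : 0 < a) {F : Finset ι}
    (hdisj : (F : Set ι).PairwiseDisjoint fun j => ball (c j) a) (z : E) (q : ℕ) :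
    ((F.filter fun j => ⌊dist z (c j) / a⌋₊ = q).card : ℝ) ≤ (q + 2) ^ finrank ℝ E := by
  have hcount := card_mul_pow_finrank_le_of_pairwiseDisjoint_ball ha
    (by positivity : 0 ≤ (q + 1) * a) (F := F.filter fun j => ⌊dist z (c j) / a⌋₊ = q)
    (hdisj.subset (Finset.coe_subset.mpr (Finset.filter_subset _ F))) fun j hj => by
      have := Nat.lt_floor_add_one (dist z (c j) / a)
      rwa [(Finset.mem_filter.mp hj).2, div_lt_iff₀ ha] at this
  rwa [show (q + 1) * a + a = (q + 2) * a by ring, mul_pow,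
    mul_le_mul_iff_left₀ (by positivity)] at hcount

theorem sum_exp_neg_mul_sq_dist_div_le {c : ι → E} {a : ℝ} (ha : 0 < a) {F : Finset ι}
    (hdisj : (F : Set ι).PairwiseDisjoint fun j => ball (c j) a) {z : E}
    (hfar : ∀ j ∈ F, a ≤ dist z (c j)) :
    ∑ j ∈ F, Real.exp (-(4 * (finrank ℝ E + 1)) * (dist z (c j) / a) ^ 2) ≤ 1 / 2 := by
  set k : ι → ℕ := fun j => ⌊dist z (c j) / a⌋₊
  set g : ℕ → ℝ := fun q => (1 / 2) ^ (q + 2) / ((q : ℝ) + 2) ^ finrank ℝ E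
  have hterm : ∀ j ∈ F,
      Real.exp (-(4 * (finrank ℝ E + 1)) * (dist z (c j) / a) ^ 2) ≤ g (k j) := fun j hj => by
    rw [le_div_iff₀ (by positivity), mul_comm]
    exact pow_mul_exp_neg_mul_sq_le ((one_le_div ha).mpr (hfar j hj)) (Nat.floor_le (by positivity))
  have hfiber : ∀ q, ((F.filter fun j => k j = q).card • g q) ≤ (1 / 2) ^ (q + 2) := fun q => by
    rw [nsmul_eq_mul]
    calc _ ≤ ((q : ℝ) + 2) ^ finrank ℝ E * g q := by
          gcongr; exact card_filter_floor_dist_div_eq_le ha hdisj z q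
      _ = (1 / 2) ^ (q + 2) := mul_div_cancel₀ _ (by positivity)
  calc _ ≤ ∑ j ∈ F, g (k j) := Finset.sum_le_sum hterm
    _ = ∑ q ∈ F.image k, (F.filter fun j => k j = q).card • g q := Finset.sum_comp g k
    _ ≤ ∑ q ∈ F.image k, ((1 : ℝ) / 2) ^ (q + 2) := Finset.sum_le_sum fun q _ => hfiber q
    _ ≤ ∑' q : ℕ, ((1 : ℝ) / 2) ^ (q + 2) :=
        (summable_geometric_two.comp_injective (add_left_injective 2)).sum_le_tsum _
          fun _ _ => by positivity
    _ = 1 / 2 := by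
        simp_rw [pow_add]
        rw [tsum_mul_right, tsum_geometric_two]
        norm_num

end Packing

theorem exp_neg_sub_log_mul_le {A η y : ℝ} (hη : 0 < η) (hη1 : η ≤ 1) (hy : 1 ≤ y) :
    Real.exp (-(A - Real.log η) * y) ≤ η * Real.exp (-A * y) := by
  conv_rhs => rw [← Real.exp_log hη, ← Real.exp_add]
  exact Real.exp_le_exp.mpr (by nlinarith [Real.log_nonpos hη.le hη1])

theorem exists_pos_lt_lt_div_sq {T α lam r₁ r' m₀ : ℝ} (hT : 0 < T) (hα : 0 < α) (hr₁ : 0 < r₁)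
    (hr' : 0 < r') : ∃ r, 0 < r ∧ r < r' ∧ lam * r < r₁ ∧ m₀ < T / (α * r ^ 2) := by
  have hlin : Tendsto (fun r => lam * r) (𝓝[>] 0) (𝓝 0) :=
    ((continuous_const_mul lam).tendsto' 0 0 (mul_zero lam)).mono_left nhdsWithin_le_nhds
  have hsq : Tendsto (fun r => α * r ^ 2) (𝓝[>] 0) (𝓝[>] 0) := by
    refine tendsto_nhdsWithin_of_tendsto_nhds_of_eventually_within _ ?_ ?_
    · exact ((by fun_prop : Continuous fun r : ℝ => α * r ^ 2).tendsto' 0 0 (by simp)).mono_left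
        nhdsWithin_le_nhds
    · filter_upwards [self_mem_nhdsWithin] with r (hr : 0 < r)
      exact mem_Ioi.mpr (by positivity)
  have hdiv : Tendsto (fun r => T / (α * r ^ 2)) (𝓝[>] 0) atTop := by
    simpa only [div_eq_mul_inv, Pi.inv_apply] using hsq.inv_tendsto_nhdsGT_zero.const_mul_atTop hT
  obtain ⟨r, hr, hrr', hlr, hm⟩ := (eventually_mem_nhdsWithin.and
    (((eventually_lt_nhds hr').filter_mono nhdsWithin_le_nhds).and
    ((hlin.eventually (gt_mem_nhds hr₁)).and (hdiv.eventually_gt_atTop m₀)))).exists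
  exact ⟨r, hr, hrr', hlr, hm⟩

theorem exists_peak_parameters {α₁ α₂ r₁ lam T r' m₀ : ℝ} (hα₁ : 0 < α₁) (hα₂ : 0 < α₂)
    (hr₁ : 0 < r₁) (hlam : lam = 4 * √(α₂ / α₁)) (hT : 0 < T) (hr' : 0 < r') :
    ∃ m r : ℝ, m₀ < m ∧ 0 < m ∧ 0 < r ∧ r < r' ∧ lam * r < r₁ ∧
      m * α₂ * r ^ 2 = T ∧ m * α₁ * (lam * r) ^ 2 = 16 * T := by
  obtain ⟨r, hr, hrr', hlr, hm₀⟩ := exists_pos_lt_lt_div_sq (m₀ := m₀) hT hα₂ hr₁ hr'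
  refine ⟨T / (α₂ * r ^ 2), r, hm₀, by positivity, hr, hrr', hlr, by field_simp, ?_⟩
  rw [hlam, mul_pow, mul_pow, Real.sq_sqrt (by positivity)]
  field_simp
  ring

section PeakFn

variable {n : ℕ} {ν : CSp n → CSp n} {m α : ℝ} {w z : CSp n}

theorem norm_peakFn : ‖peakFn ν m w z‖ = Real.exp (-(m * (inner ℂ (ν w) (w - z)).re)) := by
  simp [peakFn, Complex.norm_exp, Complex.mul_re]

theorem norm_peakFn_le_of_le_re (hm : 0 ≤ m)
    (h : α * ‖z - w‖ ^ 2 ≤ (inner ℂ (ν w) (w - z)).re) :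
    ‖peakFn ν m w z‖ ≤ Real.exp (-(m * α * ‖z - w‖ ^ 2)) := by
  rw [norm_peakFn, mul_assoc]
  exact Real.exp_le_exp.mpr (neg_le_neg (mul_le_mul_of_nonneg_left h hm))

theorem exp_neg_le_norm_peakFn {ρ : ℝ} (hm : 0 ≤ m) (hα : 0 ≤ α) (hz : dist z w ≤ ρ)
    (h : (inner ℂ (ν w) (w - z)).re ≤ α * ‖z - w‖ ^ 2) :
    Real.exp (-(m * α * ρ ^ 2)) ≤ ‖peakFn ν m w z‖ := by
  rw [norm_peakFn, mul_assoc]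
  refine Real.exp_le_exp.mpr (neg_le_neg (mul_le_mul_of_nonneg_left (h.trans ?_) hm))
  rw [← dist_eq_norm]
  gcongr

theorem exp_neg_mul_rpow_le_norm_peakFn {η A ρ : ℝ} (hη : 0 < η) (hm : 0 ≤ m) (hα : 0 ≤ α)
    (hz : dist z w ≤ ρ) (h : (inner ℂ (ν w) (w - z)).re ≤ α * ‖z - w‖ ^ 2)
    (hmα : m * α * ρ ^ 2 = A - Real.log η / 16) :
    Real.exp (-A) * η ^ ((1 : ℝ) / 16) ≤ ‖peakFn ν m w z‖ := by
  refine le_of_eq_of_le ?_ (exp_neg_le_norm_peakFn hm hα hz h)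
  rw [hmα, Real.rpow_def_of_pos hη, ← Real.exp_add]
  ring_nf

theorem norm_peakFn_lt_rpow {η A p : ℝ} (hη : 0 < η) (hη1 : η ≤ 1) (hA : 0 < A) (hp : p ≤ 1)
    (hm : 0 ≤ m) (h : α * ‖z - w‖ ^ 2 ≤ (inner ℂ (ν w) (w - z)).re)
    (hmα : m * α * ‖z - w‖ ^ 2 = A - Real.log η) :
    ‖peakFn ν m w z‖ < η ^ p :=
  calc ‖peakFn ν m w z‖ ≤ Real.exp (-(m * α * ‖z - w‖ ^ 2)) := norm_peakFn_le_of_le_re hm h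
    _ = η * Real.exp (-A) := by
        rw [hmα, neg_sub, Real.exp_sub, Real.exp_neg, Real.exp_log hη, div_eq_mul_inv]
    _ < η := mul_lt_of_lt_one_right hη (Real.exp_lt_one_iff.mpr (neg_lt_zero.mpr hA))
    _ ≤ η ^ p := Real.self_le_rpow_of_le_one hη.le hη1 hp

theorem norm_sum_mul_peakFn_lt {ι : Type*} {F : Finset ι} {c : ι → CSp n} {β : ι → ℂ} {a η : ℝ}
    (hm : 0 ≤ m) (ha : 0 < a) (hη : 0 < η) (hη1 : η ≤ 1)
    (hdisj : (F : Set ι).PairwiseDisjoint fun j => ball (c j) a)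
    (hfar : ∀ j ∈ F, a ≤ dist z (c j)) (hβ : ∀ j ∈ F, ‖β j‖ ≤ 1)
    (hre : ∀ j ∈ F, α * ‖z - c j‖ ^ 2 ≤ (inner ℂ (ν (c j)) (c j - z)).re)
    (hmα : m * α * a ^ 2 = 4 * (finrank ℝ (CSp n) + 1) - Real.log η) :
    ‖∑ j ∈ F, β j * peakFn ν m (c j) z‖ < η := by
  have hterm : ∀ j ∈ F, ‖β j * peakFn ν m (c j) z‖ ≤
      η * Real.exp (-(4 * (finrank ℝ (CSp n) + 1)) * (dist z (c j) / a) ^ 2) := fun j hj => by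
    have hx : 1 ≤ (dist z (c j) / a) ^ 2 := one_le_pow₀ ((one_le_div ha).mpr (hfar j hj))
    calc ‖β j * peakFn ν m (c j) z‖ ≤ ‖peakFn ν m (c j) z‖ := by
          rw [norm_mul]; exact mul_le_of_le_one_left (norm_nonneg _) (hβ j hj)
      _ ≤ Real.exp (-(m * α * ‖z - c j‖ ^ 2)) := norm_peakFn_le_of_le_re hm (hre j hj)
      _ = Real.exp (-(4 * (finrank ℝ (CSp n) + 1) - Real.log η) * (dist z (c j) / a) ^ 2) := by
          rw [← hmα, dist_eq_norm]; field_simp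
      _ ≤ _ := exp_neg_sub_log_mul_le hη hη1 hx
  calc ‖∑ j ∈ F, β j * peakFn ν m (c j) z‖
      ≤ ∑ j ∈ F, η * Real.exp (-(4 * (finrank ℝ (CSp n) + 1)) * (dist z (c j) / a) ^ 2) :=
        (norm_sum_le _ _).trans (Finset.sum_le_sum hterm)
    _ ≤ η * (1 / 2) := by
        rw [← Finset.mul_sum]; gcongr; exact sum_exp_neg_mul_sq_dist_div_le ha hdisj hfar
    _ < η := by linarith

end PeakFn

theorem peak_function_estimates_general
    {n : ℕ} (D : Set (CSp n))
    (ν : CSp n → CSp n)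
    (α₁ α₂ r₁ : ℝ) (hα₁pos : 0 < α₁) (hα₂pos : 0 < α₂) (hr₁pos : 0 < r₁)
    (hest₁ : ∀ w ∈ frontier D, ∀ z ∈ closure D, infDist z (frontier D) < r₁ →
      α₁ * ‖z - w‖ ^ 2 ≤ (inner ℂ (ν w) (w - z) : ℂ).re)
    (hest₂ : ∀ w ∈ frontier D, ∀ z ∈ frontier D,
      (inner ℂ (ν w) (w - z) : ℂ).re ≤ α₂ * ‖z - w‖ ^ 2)
    (lam : ℝ) (hlam : lam = 4 * Real.sqrt (α₂ / α₁))
    (s : ℕ) :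
    ∃ C : ℝ, 0 < C ∧ ∃ η₀ : ℝ, 0 < η₀ ∧
      ∀ η : ℝ, 0 < η → η < η₀ →
        ∀ r' m₀ : ℝ, 0 < r' →
          ∃ m r : ℝ, m₀ < m ∧ 0 < m ∧ 0 < r ∧ r < r' ∧ lam * r < r₁ ∧
            ∀ (N : Fin (2 * s) → ℕ) (c : (i : Fin (2 * s)) → Fin (N i) → CSp n)
              (β : (i : Fin (2 * s)) → Fin (N i) → ℂ),
              (∀ i j, c i j ∈ frontier D) →
              (∀ i j, norm (β i j) ≤ 1) →
              (∀ i, ∀ j k, j ≠ k →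
                Disjoint (ball (c i j) (lam * r)) (ball (c i k) (lam * r))) →
              (frontier D ⊆ ⋃ i, ⋃ j, ball (c i j) r) →
              ∀ i : Fin (2 * s),
                -- (a) if `z ∈ S` lies in no ball of `ℱ_i`, then `|g_i z| < η`;
                (∀ z ∈ frontier D, (∀ j, z ∉ ball (c i j) (lam * r)) →
                  norm (∑ j, β i j * peakFn ν m (c i j) z) < η) ∧
                -- (b) on `closure D ∩ 𝔹(z_{i,j}, lam r)`, `|g_i z − β_{i,j} φ_{i,j} z| < η`;
                (∀ j, ∀ z ∈ closure D ∩ ball (c i j) (lam * r),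
                  norm ((∑ k, β i k * peakFn ν m (c i k) z)
                    - β i j * peakFn ν m (c i j) z) < η) ∧
                -- (c) on `S ∩ 𝔹(z_{i,j}, r)`, `|φ_{i,j} z| ≥ C η^(1/16)`;
                (∀ j, ∀ z ∈ frontier D ∩ ball (c i j) r,
                  C * η ^ ((1:ℝ)/16) ≤ norm (peakFn ν m (c i j) z)) ∧
                -- (d) on `closure D ∩ b𝔹(z_{i,j}, lam r)`, `|φ_{i,j} z| < η^(2/3)`.
                (∀ j, ∀ z ∈ closure D ∩ sphere (c i j) (lam * r),
                  norm (peakFn ν m (c i j) z) < η ^ ((2:ℝ)/3)) := by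
  set K : ℝ := finrank ℝ (CSp n) + 1
  have hK : 0 < K := Nat.cast_add_one_pos _
  refine ⟨Real.exp (-(K / 4)), Real.exp_pos _, 1, one_pos, fun η hη hη1 r' m₀ hr' => ?_⟩
  have hT : 0 < K / 4 - Real.log η / 16 := by linarith [Real.log_neg hη hη1]
  obtain ⟨m, r, hm₀, hm, hr, hrr', hlr, hmα₂, hmα₁⟩ :=
    exists_peak_parameters (m₀ := m₀) hα₁pos hα₂pos hr₁pos hlam hT hr'
  refine ⟨m, r, hm₀, hm, hr, hrr', hlr, fun N c β hcS hβ hdisj _ i => ?_⟩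
  have ha : 0 < lam * r := by rw [hlam]; positivity
  have hmα₁' : m * α₁ * (lam * r) ^ 2 = 4 * K - Real.log η := by rw [hmα₁]; ring
  have hnear (z : CSp n) (j : Fin (N i)) (hz : dist z (c i j) ≤ lam * r) :
      infDist z (frontier D) < r₁ :=
    (infDist_le_dist_of_mem (hcS i j)).trans_lt (hz.trans_lt hlr)
  refine ⟨fun z hz hfar => ?_, fun j z ⟨hzD, hzb⟩ => ?_, fun j z ⟨hzS, hzb⟩ => ?_,
    fun j z ⟨hzD, hzs⟩ => ?_⟩
  · exact norm_sum_mul_peakFn_lt hm.le ha hη hη1.le (fun j _ k _ hjk => hdisj i j k hjk)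
      (fun j _ => not_lt.mp (hfar j)) (fun j _ => hβ i j)
      (fun j _ => hest₁ _ (hcS i j) z (frontier_subset_closure hz)
        (by rwa [infDist_zero_of_mem hz])) hmα₁'
  · rw [← Finset.sum_erase_eq_sub (Finset.mem_univ j)]
    exact norm_sum_mul_peakFn_lt hm.le ha hη hη1.le (fun j _ k _ hjk => hdisj i j k hjk)
      (fun k hk => not_lt.mp fun hzk =>
        Set.disjoint_left.mp (hdisj i j k (Finset.ne_of_mem_erase hk).symm) hzb hzk)
      (fun k _ => hβ i k) (fun k _ => hest₁ _ (hcS i k) z hzD (hnear z j hzb.le)) hmα₁'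
  · exact exp_neg_mul_rpow_le_norm_peakFn hη hm.le hα₂pos.le (mem_ball.mp hzb).le
      (hest₂ _ (hcS i j) z hzS) hmα₂
  · have hnorm : ‖z - c i j‖ = lam * r := by rw [← dist_eq_norm]; exact hzs
    exact norm_peakFn_lt_rpow (A := 4 * K) hη hη1.le (by positivity) (by norm_num) hm.le
      (hest₁ _ (hcS i j) z hzD (hnear z j hzs.le)) (by rw [hnorm, hmα₁'])

/-- Lemma 2.3. With `D`, `ν`, `α₁, α₂, r₁` as in the convexity estimates,
`lam = 4√(α₂/α₁)` and `s` a covering integer for `lam`, there is a constant `C > 0`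
(independent of `r`, `m`, `η`) such that for every sufficiently small `η > 0` there are
`m > 0` and `r > 0` with `0 < lam * r < r₁` — and `r` can be taken arbitrarily small and `m`
arbitrarily large — such that for all `2s` families of pairwise disjoint balls of radius
`lam * r` centered on `S` whose concentric `r`-balls cover `S`, and all coefficients
`|β_{i,j}| ≤ 1`, for the functions `φ_{i,j}(z) = exp(-m⟨z_{i,j} - z, ν(z_{i,j})⟩)` and
`g_i = Σ_j β_{i,j} φ_{i,j}`, each index `i` satisfies (a)–(d). -/
theorem peak_function_estimates
    {n : ℕ} (D : Set (CSp n)) (hD : IsStrictlyConvexC2Domain D)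
    (ν : CSp n → CSp n) (hν : IsOutwardUnitNormal D ν)
    (α₁ α₂ r₁ : ℝ) (hα₁pos : 0 < α₁) (hα₂pos : 0 < α₂) (hr₁pos : 0 < r₁)
    (hest₁ : ∀ w ∈ frontier D, ∀ z ∈ closure D, infDist z (frontier D) < r₁ →
      α₁ * ‖z - w‖ ^ 2 ≤ (inner ℂ (ν w) (w - z) : ℂ).re)
    (hest₂ : ∀ w ∈ frontier D, ∀ z ∈ frontier D,
      (inner ℂ (ν w) (w - z) : ℂ).re ≤ α₂ * ‖z - w‖ ^ 2)
    (lam : ℝ) (hlam : lam = 4 * Real.sqrt (α₂ / α₁))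
    (s : ℕ) (hs : IsCoveringInteger (frontier D) lam s) :
    ∃ C : ℝ, 0 < C ∧ ∃ η₀ : ℝ, 0 < η₀ ∧
      ∀ η : ℝ, 0 < η → η < η₀ →
        ∀ r' m₀ : ℝ, 0 < r' →
          ∃ m r : ℝ, m₀ < m ∧ 0 < m ∧ 0 < r ∧ r < r' ∧ lam * r < r₁ ∧
            ∀ (N : Fin (2 * s) → ℕ) (c : (i : Fin (2 * s)) → Fin (N i) → CSp n)
              (β : (i : Fin (2 * s)) → Fin (N i) → ℂ),
              (∀ i j, c i j ∈ frontier D) →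
              (∀ i j, norm (β i j) ≤ 1) →
              (∀ i, ∀ j k, j ≠ k →
                Disjoint (ball (c i j) (lam * r)) (ball (c i k) (lam * r))) →
              (frontier D ⊆ ⋃ i, ⋃ j, ball (c i j) r) →
              ∀ i : Fin (2 * s),
                -- (a) if `z ∈ S` lies in no ball of `ℱ_i`, then `|g_i z| < η`;
                (∀ z ∈ frontier D, (∀ j, z ∉ ball (c i j) (lam * r)) →
                  norm (∑ j, β i j * peakFn ν m (c i j) z) < η) ∧
                -- (b) on `closure D ∩ 𝔹(z_{i,j}, lam r)`, `|g_i z − β_{i,j} φ_{i,j} z| < η`;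
                (∀ j, ∀ z ∈ closure D ∩ ball (c i j) (lam * r),
                  norm ((∑ k, β i k * peakFn ν m (c i k) z)
                    - β i j * peakFn ν m (c i j) z) < η) ∧
                -- (c) on `S ∩ 𝔹(z_{i,j}, r)`, `|φ_{i,j} z| ≥ C η^(1/16)`;
                (∀ j, ∀ z ∈ frontier D ∩ ball (c i j) r,
                  C * η ^ ((1:ℝ)/16) ≤ norm (peakFn ν m (c i j) z)) ∧
                -- (d) on `closure D ∩ b𝔹(z_{i,j}, lam r)`, `|φ_{i,j} z| < η^(2/3)`.
                (∀ j, ∀ z ∈ closure D ∩ sphere (c i j) (lam * r),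
                  norm (peakFn ν m (c i j) z) < η ^ ((2:ℝ)/3)) :=
  peak_function_estimates_general D ν α₁ α₂ r₁ hα₁pos hα₂pos hr₁pos hest₁ hest₂ lam hlam s
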